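/- arXiv:2501.13092 — 4 statements merged into one kernel-verified Lean document; each statement's English description precedes it below -/
import Mathlib

section
/- Let Q : ℤ × {0,1} → ℝ≥0 be finitely supported with symmetry Q(t,0) = Q(-t,1) and each marginal summing to 1/2. Define the plus transform Q⁺(t,v) = Σ over (t_a,t_b,u) with (-1)^u·t_a + t_b = t of Q(t_a, u ⊕ v)·Q(t_b, v). Then for all real ξ > 0, Σ_t Q⁺(t,0)·ξ^t = 2·(Σ_t Q(t,0)·ξ^t)². -/
/-- The plus transform of the joint distribution `Q`:
`Q⁺(t;v) = Σ_{t_a,t_b,u : (-1)^u·t_a + t_b = t} Q(t_a; u⊕v)·Q(t_b; v)`,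
with bits encoded as `Bool` (`false ↔ 0`, `true ↔ 1`). -/
noncomputable def plusT (Q : ℤ → Bool → ℝ) (t : ℤ) (v : Bool) : ℝ :=
  ∑' p : ℤ × ℤ × Bool,
    if (if p.2.2 then -p.1 + p.2.1 else p.1 + p.2.1) = t then
      Q p.1 (xor p.2.2 v) * Q p.2.1 v else 0

/-- Posynomial identity for the plus transform:
`Σ_t Q⁺(t,0)·ξ^t = 2·(Σ_t Q(t,0)·ξ^t)²`. -/
theorem plus_posynomial (Q : ℤ → Bool → ℝ)
    (hnn : ∀ t u, 0 ≤ Q t u)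
    (hfin : (Function.support fun p : ℤ × Bool => Q p.1 p.2).Finite)
    (hsym : ∀ t : ℤ, Q t false = Q (-t) true)
    (hmarg : ∀ u : Bool, ∑' t : ℤ, Q t u = 1 / 2)
    (ξ : ℝ) (hξ : 0 < ξ) :
    ∑' t : ℤ, plusT Q t false * ξ ^ t
      = 2 * (∑' t : ℤ, Q t false * ξ ^ t) ^ 2 := by
  classical
  set s : Finset ℤ := hfin.toFinset.image Prod.fst with hs
  set s2 : Finset ℤ := s ∪ s.image (fun x => -x) with hs2
  have hQ0 : ∀ t u, t ∉ s2 → Q t u = 0 := by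
    intro t u ht
    by_contra h
    apply ht
    have hmem : (t, u) ∈ hfin.toFinset := by
      simpa [Set.Finite.mem_toFinset, Function.mem_support] using h
    exact Finset.mem_union_left _ (Finset.mem_image.mpr ⟨(t, u), hmem, rfl⟩)
  have hs2symm : ∀ t : ℤ, t ∈ s2 ↔ -t ∈ s2 := by
    intro t
    simp only [hs2, Finset.mem_union, Finset.mem_image]
    constructor
    · rintro (h | ⟨a, ha, rfl⟩)
      · exact Or.inr ⟨t, h, rfl⟩
      · simpa using Or.inl ha
    · rintro (h | ⟨a, ha, hae⟩)
      · exact Or.inr ⟨-t, h, by ring⟩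
      · have : a = t := by omega
        subst this; exact Or.inl ha
  have hxne : ξ ≠ 0 := hξ.ne'
  set A := ∑' t : ℤ, Q t false * ξ ^ t with hA
  have hA2 : A = ∑ t ∈ s2, Q t false * ξ ^ t :=
    tsum_eq_sum (fun b hb => by rw [hQ0 b false hb, zero_mul])
  have hA1 : ∑ t ∈ s2, Q t true * ξ ^ (-t) = A := by
    rw [hA2]
    refine Finset.sum_equiv (Equiv.neg ℤ) (fun i => ?_) (fun i hi => ?_)
    · simpa using (hs2symm i)
    · simp only [Equiv.neg_apply]
      rw [hsym (-i), neg_neg]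
  set P : Finset (ℤ × ℤ × Bool) := s2 ×ˢ s2 ×ˢ (Finset.univ : Finset Bool) with hP
  have key : ∀ t : ℤ, plusT Q t false =
      ∑ p ∈ P, if (if p.2.2 then -p.1 + p.2.1 else p.1 + p.2.1) = t then
        Q p.1 p.2.2 * Q p.2.1 false else 0 := by
    intro t
    unfold plusT
    simp only [Bool.xor_false]
    refine tsum_eq_sum ?_
    intro p hp
    simp only [hP, Finset.mem_product, Finset.mem_univ, and_true, not_and_or] at hp
    rcases hp with h | h
    · rw [hQ0 _ _ h, zero_mul, ite_self]
    · rw [hQ0 _ _ h, mul_zero, ite_self]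
  have step2 : ∑' t : ℤ, plusT Q t false * ξ ^ t =
      ∑ p ∈ P, Q p.1 p.2.2 * Q p.2.1 false *
        ξ ^ (if p.2.2 then -p.1 + p.2.1 else p.1 + p.2.1) := by
    have e1 : ∑' t : ℤ, plusT Q t false * ξ ^ t =
        ∑' t : ℤ, ∑ p ∈ P, (if (if p.2.2 then -p.1 + p.2.1 else p.1 + p.2.1) = t then
          Q p.1 p.2.2 * Q p.2.1 false * ξ ^ t else 0) := by
      refine tsum_congr fun t => ?_
      rw [key t, Finset.sum_mul]
      refine Finset.sum_congr rfl fun p _ => ?_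
      rw [ite_mul, zero_mul]
    rw [e1, Summable.tsum_finsetSum]
    · refine Finset.sum_congr rfl fun p _ => ?_
      rw [tsum_eq_single (if p.2.2 then -p.1 + p.2.1 else p.1 + p.2.1)]
      · rw [if_pos rfl]
      · intro t ht
        rw [if_neg (fun h => ht h.symm)]
    · intro p _
      refine summable_of_ne_finset_zero
        (s := {(if p.2.2 then -p.1 + p.2.1 else p.1 + p.2.1)}) ?_
      intro b hb
      rw [if_neg (fun h => hb (by simp [h]))]
  rw [step2, hP, Finset.sum_product, ]
  have expand : ∀ a : ℤ, ∑ q ∈ s2 ×ˢ (Finset.univ : Finset Bool),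
      Q a q.2 * Q q.1 false * ξ ^ (if q.2 then -a + q.1 else a + q.1)
      = ∑ b ∈ s2, (Q a true * ξ ^ (-a)) * (Q b false * ξ ^ b)
        + ∑ b ∈ s2, (Q a false * ξ ^ a) * (Q b false * ξ ^ b) := by
    intro a
    rw [Finset.sum_product, ← Finset.sum_add_distrib]
    refine Finset.sum_congr rfl fun b _ => ?_
    rw [Fintype.sum_bool]
    simp only [if_true, Bool.false_eq_true, if_false]
    rw [zpow_add₀ hxne, zpow_add₀ hxne]
    ring
  calc ∑ a ∈ s2, ∑ q ∈ s2 ×ˢ (Finset.univ : Finset Bool),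
        Q a q.2 * Q q.1 false * ξ ^ (if q.2 then -a + q.1 else a + q.1)
      = ∑ a ∈ s2, (∑ b ∈ s2, (Q a true * ξ ^ (-a)) * (Q b false * ξ ^ b)
        + ∑ b ∈ s2, (Q a false * ξ ^ a) * (Q b false * ξ ^ b)) :=
        Finset.sum_congr rfl fun a _ => expand a
    _ = (∑ a ∈ s2, Q a true * ξ ^ (-a)) * (∑ b ∈ s2, Q b false * ξ ^ b)
        + (∑ a ∈ s2, Q a false * ξ ^ a) * (∑ b ∈ s2, Q b false * ξ ^ b) := by
        rw [Finset.sum_add_distrib, Finset.sum_mul_sum, Finset.sum_mul_sum]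
    _ = A * A + A * A := by rw [hA1, ← hA2]
    _ = 2 * A ^ 2 := by ring
end

section
/- Let Q : ℤ × {0,1} → ℝ≥0 be finitely supported with symmetry Q(t,0) = Q(-t,1) and each marginal summing to 1/2. Define the minus transform Q⁻(t,u) = Σ over (t_a,t_b,v) with f̃(t_a,t_b) = t of Q(t_a; u ⊕ v)·Q(t_b; v). Then for all ξ₀ with 0 < ξ₀ ≤ 1, Σ_t Q⁻(t,0)·ξ₀^t ≤ 2·Σ_t Q(t,0)·ξ₀^t. -/
/-- The minus transform of the joint distribution `Q`:
`Q⁻(t;u) = Σ_{t_a,t_b,v : f̃(t_a,t_b) = t} Q(t_a; u⊕v)·Q(t_b; v)`,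
where `f̃(a,b) = sign(a)·sign(b)·min{|a|,|b|}` and bits are encoded as `Bool`. -/
noncomputable def minusT (Q : ℤ → Bool → ℝ) (t : ℤ) (u : Bool) : ℝ :=
  ∑' p : ℤ × ℤ × Bool,
    if Int.sign p.1 * Int.sign p.2.1 * min |p.1| |p.2.1| = t then
      Q p.1 (xor u p.2.2) * Q p.2.1 p.2.2 else 0

/-!
Grouping the terms of `Σ_t Q⁻(t,0) ξ^t` by their index `(a, b, v)` gives
`Σ_{a,b,v} Q(a,v) Q(b,v) ξ^{f̃(a,b)}`. Since `f̃(-a,-b) = f̃(a,b)`, the symmetry `Q(t,0) = Q(-t,1)`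
makes the `v = 1` half equal to the `v = 0` half. As `f̃(a,b) ≥ min a b` and `ξ ≤ 1`,
`ξ^{f̃(a,b)} ≤ ξ^a + ξ^b`, and summing this against `Q(a,0) Q(b,0)`, whose marginals are `1/2`,
bounds each half by `Σ_t Q(t,0) ξ^t`.
-/

open Function

def signMin (a b : ℤ) : ℤ := a.sign * b.sign * min |a| |b|

lemma min_le_signMin (a b : ℤ) : min a b ≤ signMin a b := by
  rcases lt_trichotomy a 0 with ha | rfl | ha <;> rcases lt_trichotomy b 0 with hb | rfl | hb <;>
    simp_all [signMin, Int.sign_eq_one_of_pos, Int.sign_eq_neg_one_of_neg, abs_of_pos, abs_of_neg] <;>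
    omega

lemma signMin_neg_neg (a b : ℤ) : signMin (-a) (-b) = signMin a b := by
  simp [signMin]

lemma zpow_signMin_le_add {ξ : ℝ} (h0 : 0 < ξ) (h1 : ξ ≤ 1) (a b : ℤ) :
    ξ ^ signMin a b ≤ ξ ^ a + ξ ^ b := by
  calc ξ ^ signMin a b ≤ ξ ^ min a b := zpow_le_zpow_right_of_le_one₀ h0 h1 (min_le_signMin a b)
    _ ≤ max (ξ ^ a) (ξ ^ b) := by
        rcases min_cases a b with ⟨h, _⟩ | ⟨h, _⟩ <;> rw [h] <;> simp
    _ ≤ ξ ^ a + ξ ^ b := max_le_add_of_nonneg (zpow_pos h0 a).le (zpow_pos h0 b).le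

theorem Finset.sum_sum_mul_mul_add {ι R : Type*} [CommSemiring R] (s : Finset ι) (w x : ι → R) :
    ∑ a ∈ s, ∑ b ∈ s, w a * w b * (x a + x b) = 2 * (∑ a ∈ s, w a) * ∑ a ∈ s, w a * x a := by
  rw [mul_assoc, Finset.sum_mul_sum, two_mul]
  simp only [mul_add, Finset.sum_add_distrib]
  congr 1
  · rw [Finset.sum_comm]
    exact Finset.sum_congr rfl fun _ _ => Finset.sum_congr rfl fun _ _ => by ring
  · exact Finset.sum_congr rfl fun _ _ => Finset.sum_congr rfl fun _ _ => by ring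

theorem tsum_tsum_ite_eq_mul {α β R : Type*} [DecidableEq β] [CommSemiring R] [TopologicalSpace R]
    {g : α → R} (hg : (support g).Finite) (f : α → β) (h : β → R) :
    ∑' b, (∑' a, if f a = b then g a else 0) * h b = ∑' a, g a * h (f a) := by
  set s := hg.toFinset
  have hs : ∀ a ∉ s, g a = 0 := fun a ha => by simpa [s] using ha
  have fiber : ∀ b, ∑' a, (if f a = b then g a else 0) = ∑ a ∈ s, if f a = b then g a else 0 :=
    fun b => tsum_eq_sum fun a ha => by simp [hs a ha]
  simp_rw [fiber]
  rw [tsum_eq_sum (s := s.image f), tsum_eq_sum (s := s)]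
  · simp_rw [Finset.sum_mul, ite_mul, zero_mul]
    rw [Finset.sum_comm]
    exact Finset.sum_congr rfl fun a ha => by simp [Finset.mem_image_of_mem f ha]
  · intro a ha; simp [hs a ha]
  · intro b hb
    rw [Finset.sum_eq_zero, zero_mul]
    intro a ha
    rw [if_neg fun (hab : f a = b) => hb (hab ▸ Finset.mem_image_of_mem f ha)]

theorem tsum_prod_bool {α : Type*} {F : α × Bool → ℝ} (hsum : Summable F) :
    ∑' p, F p = ∑' a, F (a, false) + ∑' a, F (a, true) := by
  rw [hsum.tsum_prod' fun _ => .of_finite]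
  simp_rw [tsum_bool]
  exact (hsum.comp_injective (Prod.mk_left_injective false)).tsum_add
    (hsum.comp_injective (Prod.mk_left_injective true))

theorem finite_support_mul_xor {Q : ℤ → Bool → ℝ}
    (hfin : (support fun p : ℤ × Bool => Q p.1 p.2).Finite) (u : Bool) :
    (support fun p : ℤ × ℤ × Bool => Q p.1 (xor u p.2.2) * Q p.2.1 p.2.2).Finite := by
  have hinj : Injective fun p : ℤ × ℤ × Bool => ((p.1, xor u p.2.2), (p.2.1, p.2.2)) := by
    rintro ⟨a, b, v⟩ ⟨a', b', v'⟩ hp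
    simp only [Prod.mk.injEq] at hp
    obtain ⟨⟨rfl, -⟩, rfl, rfl⟩ := hp
    rfl
  refine ((hfin.prod hfin).preimage hinj.injOn).subset fun p hp => ?_
  exact (mul_ne_zero_iff.1 hp).imp id id

theorem tsum_minusT_mul {Q : ℤ → Bool → ℝ} (hfin : (support fun p : ℤ × Bool => Q p.1 p.2).Finite)
    (u : Bool) (h : ℤ → ℝ) :
    ∑' t, minusT Q t u * h t
      = ∑' p : ℤ × ℤ × Bool, Q p.1 (xor u p.2.2) * Q p.2.1 p.2.2 * h (signMin p.1 p.2.1) :=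
  tsum_tsum_ite_eq_mul (finite_support_mul_xor hfin u) _ h

theorem tsum_minusT_false_mul {Q : ℤ → Bool → ℝ}
    (hfin : (support fun p : ℤ × Bool => Q p.1 p.2).Finite)
    (hsym : ∀ t : ℤ, Q t false = Q (-t) true) (h : ℤ → ℝ) :
    ∑' t, minusT Q t false * h t
      = 2 * ∑' x : ℤ × ℤ, Q x.1 false * Q x.2 false * h (signMin x.1 x.2) := by
  have hsum : Summable fun p : ℤ × ℤ × Bool =>
      Q p.1 (xor false p.2.2) * Q p.2.1 p.2.2 * h (signMin p.1 p.2.1) :=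
    summable_of_hasFiniteSupport <|
      (finite_support_mul_xor hfin false).subset (support_mul_subset_left _ _)
  simp only [Bool.false_xor] at hsum
  have reflect : ∑' x : ℤ × ℤ, Q x.1 true * Q x.2 true * h (signMin x.1 x.2)
      = ∑' x : ℤ × ℤ, Q x.1 false * Q x.2 false * h (signMin x.1 x.2) := by
    rw [← (Equiv.neg (ℤ × ℤ)).tsum_eq (fun x => Q x.1 false * Q x.2 false * h (signMin x.1 x.2))]
    simp [hsym, signMin_neg_neg]
  simp only [tsum_minusT_mul hfin, Bool.false_xor]
  rw [← (Equiv.prodAssoc ℤ ℤ Bool).tsum_eq, tsum_prod_bool]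
  · simp only [Equiv.prodAssoc_apply, reflect]
    ring
  · exact (Equiv.prodAssoc ℤ ℤ Bool).summable_iff.2 hsum

theorem tsum_mul_mul_zpow_signMin_le {w : ℤ → ℝ} (hnn : ∀ t, 0 ≤ w t) (hfin : (support w).Finite)
    {ξ : ℝ} (h0 : 0 < ξ) (h1 : ξ ≤ 1) :
    ∑' x : ℤ × ℤ, w x.1 * w x.2 * ξ ^ signMin x.1 x.2 ≤ 2 * (∑' t, w t) * ∑' t, w t * ξ ^ t := by
  set s := hfin.toFinset
  have hs : ∀ t ∉ s, w t = 0 := fun t ht => by simpa [s] using ht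
  rw [tsum_eq_sum (s := s ×ˢ s), tsum_eq_sum (s := s) fun t ht => hs t ht,
    tsum_eq_sum (s := s) fun t ht => by rw [hs t ht, zero_mul], ← Finset.sum_sum_mul_mul_add,
    Finset.sum_product]
  · gcongr with a _ b _
    · exact mul_nonneg (hnn a) (hnn b)
    · exact zpow_signMin_le_add h0 h1 a b
  · intro x hx
    rw [Finset.mem_product, not_and_or] at hx
    rcases hx with h | h <;> simp [hs _ h]

/-- Posynomial bound for the minus transform:
`Σ_t Q⁻(t,0)·ξ₀^t ≤ 2·Σ_t Q(t,0)·ξ₀^t` for `0 < ξ₀ ≤ 1`. -/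
theorem minus_posynomial_bound (Q : ℤ → Bool → ℝ)
    (hnn : ∀ t u, 0 ≤ Q t u)
    (hfin : (Function.support fun p : ℤ × Bool => Q p.1 p.2).Finite)
    (hsym : ∀ t : ℤ, Q t false = Q (-t) true)
    (hmarg : ∀ u : Bool, ∑' t : ℤ, Q t u = 1 / 2)
    (ξ₀ : ℝ) (h0 : 0 < ξ₀) (h1 : ξ₀ ≤ 1) :
    ∑' t : ℤ, minusT Q t false * ξ₀ ^ t
      ≤ 2 * ∑' t : ℤ, Q t false * ξ₀ ^ t := by
  have hfin₀ : (support fun t => Q t false).Finite :=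
    hfin.preimage (Prod.mk_left_injective false).injOn
  calc ∑' t, minusT Q t false * ξ₀ ^ t
      = 2 * ∑' x : ℤ × ℤ, Q x.1 false * Q x.2 false * ξ₀ ^ signMin x.1 x.2 :=
        tsum_minusT_false_mul hfin hsym _
    _ ≤ 2 * (2 * (∑' t, Q t false) * ∑' t, Q t false * ξ₀ ^ t) := by
        gcongr
        exact tsum_mul_mul_zpow_signMin_le (hnn · false) hfin₀ h0 h1
    _ = 2 * ∑' t, Q t false * ξ₀ ^ t := by rw [hmarg]; ring
end

section
/- Let Q : ℤ × {0,1} → ℝ≥0 be finitely supported with each marginal summing to 1/2, and suppose the sign-consistency condition holds: Q(t,0) ≥ Q(-t,0) for all t > 0, with strict inequality for at least one t > 0. Define Z(ξ) = 2·Σ_t Q(t,0)·ξ^t for ξ ∈ (0,1]. Then there exists ξ₀ ∈ (0,1) with Z(ξ₀) < 1. (The proof uses Z(1) = 1 and dZ/dξ at ξ = 1 being strictly positive.) -/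
/-!
`Z` is a Laurent polynomial with `Z 1 = 2 * ∑ Q(t,0) = 1` and `Z' 1 = 2 * ∑ t * Q(t,0)`.
Pairing `t` with `-t` turns the first moment into half of `∑ t * (Q(t,0) - Q(-t,0))`, a sum of
nonnegative terms with a positive one, so `Z' 1 > 0` and `Z` drops below `1` just left of `1`.
-/

open Filter Topology Set Function

theorem HasDerivAt.eventually_lt_of_pos_left {f : ℝ → ℝ} {f' x : ℝ} (hf : HasDerivAt f f' x)
    (hf' : 0 < f') : ∀ᶠ y in 𝓝[<] x, f y < f x := by
  have hslope : ∀ᶠ y in 𝓝[<] x, 0 < slope f x y :=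
    (hasDerivAt_iff_tendsto_slope_left_right.mp hf).1.eventually (eventually_gt_nhds hf')
  filter_upwards [hslope, self_mem_nhdsWithin] with y hy hyx
  have hdiff : (y - x) * slope f x y = f y - f x := sub_smul_slope f x y
  nlinarith [sub_neg.mpr (show y < x from hyx)]

theorem hasDerivAt_tsum_mul_zpow {w : ℤ → ℝ} (hw : w.HasFiniteSupport) {x : ℝ} (hx : x ≠ 0) :
    HasDerivAt (fun ξ => ∑' t, w t * ξ ^ t) (∑' t, w t * (t * x ^ (t - 1))) x := by
  classical
  set S := Set.Finite.toFinset hw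
  have hS : ∀ t ∉ S, w t = 0 := fun t ht => notMem_support.mp (mt hw.mem_toFinset.mpr ht)
  have hsum : ∀ g : ℤ → ℝ, ∑' t, w t * g t = ∑ t ∈ S, w t * g t := fun g =>
    tsum_eq_sum fun t ht => by rw [hS t ht, zero_mul]
  simp only [hsum]
  exact HasDerivAt.fun_sum fun t _ => (hasDerivAt_zpow t x (Or.inl hx)).const_mul (w t)

theorem tsum_mul_pos_of_apply_neg_le {w : ℤ → ℝ} (hw : w.HasFiniteSupport)
    (hsign : ∀ t : ℤ, 0 < t → w (-t) ≤ w t) (hstrict : ∃ t : ℤ, 0 < t ∧ w (-t) < w t) :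
    0 < ∑' t, w t * t := by
  have hsumm : Summable fun t : ℤ => w t * t := summable_of_hasFiniteSupport (hw.mul_left _)
  have hsumm_neg : Summable fun t : ℤ => w (-t) * t :=
    summable_of_hasFiniteSupport ((hw.fun_comp_of_injective neg_injective).mul_left _)
  have hodd : ∑' t : ℤ, w (-t) * t = - ∑' t, w t * t := by
    rw [← tsum_neg, ← tsum_comp_neg (fun t : ℤ => - (w t * t))]
    simp
  have hpair : ∀ t : ℤ, 0 ≤ (w t - w (-t)) * t := by
    intro t
    rcases lt_trichotomy t 0 with ht | rfl | ht
    · have hle := hsign (-t) (neg_pos.mpr ht)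
      rw [neg_neg] at hle
      exact mul_nonneg_of_nonpos_of_nonpos (by linarith) (by exact_mod_cast ht.le)
    · simp
    · exact mul_nonneg (sub_nonneg.mpr (hsign t ht)) (by exact_mod_cast ht.le)
  obtain ⟨t₀, ht₀, hlt⟩ := hstrict
  have hpos : 0 < ∑' t : ℤ, (w t - w (-t)) * t :=
    (hsumm.sub hsumm_neg).congr (fun t => by ring) |>.tsum_pos hpair t₀
      (mul_pos (sub_pos.mpr hlt) (by exact_mod_cast ht₀))
  have htwice : ∑' t : ℤ, (w t - w (-t)) * t = 2 * ∑' t, w t * t := by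
    simp_rw [sub_mul]
    rw [hsumm.tsum_sub hsumm_neg, hodd]; ring
  linarith

theorem exists_xi_Z_lt_one_general (Q : ℤ → Bool → ℝ)
    (hfin : (Function.support fun p : ℤ × Bool => Q p.1 p.2).Finite)
    (hmarg : ∀ u : Bool, ∑' t : ℤ, Q t u = 1 / 2)
    (hsign : ∀ t : ℤ, 0 < t → Q (-t) false ≤ Q t false)
    (hstrict : ∃ t : ℤ, 0 < t ∧ Q (-t) false < Q t false) :
    ∃ ξ₀ : ℝ, 0 < ξ₀ ∧ ξ₀ < 1 ∧ 2 * (∑' t : ℤ, Q t false * ξ₀ ^ t) < 1 := by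
  have hQ : (fun t => Q t false).HasFiniteSupport :=
    hfin.preimage (Prod.mk_left_injective false).injOn
  set Z : ℝ → ℝ := fun ξ => 2 * ∑' t : ℤ, Q t false * ξ ^ t
  have hZ_one : Z 1 = 1 := by norm_num [Z, hmarg false]
  have hZ_deriv : HasDerivAt Z (2 * ∑' t : ℤ, Q t false * t) 1 := by
    simpa using (hasDerivAt_tsum_mul_zpow hQ one_ne_zero).const_mul 2
  have hmoment := tsum_mul_pos_of_apply_neg_le hQ hsign hstrict
  obtain ⟨ξ, hZξ, hξ⟩ := ((hZ_deriv.eventually_lt_of_pos_left (by positivity)).and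
    (Ioo_mem_nhdsLT zero_lt_one)).exists
  exact ⟨ξ, hξ.1, hξ.2, hZ_one ▸ hZξ⟩

/-- Under sign consistency, the Bhattacharyya-like parameter `Z(ξ) = 2·Σ_t Q(t,0)·ξ^t`
drops below `1` for some `ξ₀ ∈ (0,1)`. -/
theorem exists_xi_Z_lt_one (Q : ℤ → Bool → ℝ)
    (hnn : ∀ t u, 0 ≤ Q t u)
    (hfin : (Function.support fun p : ℤ × Bool => Q p.1 p.2).Finite)
    (hmarg : ∀ u : Bool, ∑' t : ℤ, Q t u = 1 / 2)
    (hsign : ∀ t : ℤ, 0 < t → Q (-t) false ≤ Q t false)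
    (hstrict : ∃ t : ℤ, 0 < t ∧ Q (-t) false < Q t false) :
    ∃ ξ₀ : ℝ, 0 < ξ₀ ∧ ξ₀ < 1 ∧ 2 * (∑' t : ℤ, Q t false * ξ₀ ^ t) < 1 :=
  exists_xi_Z_lt_one_general Q hfin hmarg hsign hstrict
end

section
/- Let S₀, S₁, … be a [0,1]-valued random process adapted to an i.i.d. fair-coin sequence B₁, B₂, …, satisfying S_{n+1} ≤ 2·S_n when B_{n+1} = 0 and S_{n+1} ≤ 2·S_n² when B_{n+1} = 1. Fix 0 < β < 1/2, η > 0, and δ > δ'(η) where δ'(η) = 2·(8η)^{log₂ φ} with φ = (1+√5)/2. Then there exists n₀ depending only on β and δ − δ'(η) such that if S₀ ≤ η, then Pr(S_n ≤ 2^{−2^{nβ}} for all n ≥ n₀) ≥ 1 − δ. -/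
open MeasureTheory ProbabilityTheory

/-- `δ'(η) = 2·(8η)^{log₂ φ}` with `φ = (1+√5)/2` the golden ratio. -/
noncomputable def deltaP (η : ℝ) : ℝ :=
  2 * (8 * η) ^ Real.logb 2 ((1 + Real.sqrt 5) / 2)

/-!
Write `W_n = -log₂ (2 S_n)`. A tail lowers `W` by at most one and a head at least doubles it, so
`W` dominates the walk `coinWalk u` (`w ↦ w - 1` on tails, `w ↦ 2w` on heads) started at
`u = -log₂ (2η)`. For `w ≥ 2` the potential `φ ^ (3 - w)` does not increase in expectation, as
`φ ^ (-w) + φ ≤ 2`; so the walk ever drops below `3` with probability at most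
`φ ^ (3 - u) ≤ δ'(η)`. Above `3` a tail multiplies the walk by at least `2/3`, so if heads have
frequency at least `1/2 - ε` on all long windows (a Chernoff bound) the walk first exceeds a
constant `M`, after which a tail costs only a factor `1 - 1/M ≥ 2 ^ (-2ε)`; with
`ε = (1/2 - β)/8` this gives `W_n ≥ 2 ^ (nβ)`. The Chernoff failure probabilities decay
geometrically, so the threshold depends only on `β` and `δ - δ'(η)`.
-/

open Finset Real goldenRatio
open scoped ENNReal

def walkStep (u : ℝ) (b : Bool) : ℝ := if b then 2 * u else u - 1

def coinWalk (u : ℝ) (c : ℕ → Bool) : ℕ → ℝ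
  | 0 => u
  | n + 1 => walkStep (coinWalk u c n) (c n)

section Walk

variable {u : ℝ} {c : ℕ → Bool}

lemma coinWalk_congr {c' : ℕ → Bool} {k : ℕ} (h : ∀ i < k, c i = c' i) :
    coinWalk u c k = coinWalk u c' k := by
  induction k with
  | zero => rfl
  | succ k ih =>
    simp only [coinWalk, ih fun i hi => h i (by omega), h k (by omega)]

lemma coinWalk_succ' (k : ℕ) :
    coinWalk u c (k + 1) = coinWalk (walkStep u (c 0)) (fun i => c (i + 1)) k := by
  induction k with
  | zero => rfl
  | succ k ih => rw [coinWalk, ih]; rfl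

lemma le_two_rpow_neg_coinWalk {S : ℕ → ℝ} (hS : ∀ n, 0 ≤ S n) (h0 : S 0 ≤ 2 ^ (-(u + 1)))
    (htail : ∀ n, c n = false → S (n + 1) ≤ 2 * S n)
    (hhead : ∀ n, c n = true → S (n + 1) ≤ 2 * S n ^ 2) (n : ℕ) :
    S n ≤ 2 ^ (-(coinWalk u c n + 1)) := by
  induction n with
  | zero => exact h0
  | succ n ih =>
    set w := coinWalk u c n
    cases hc : c n
    · calc S (n + 1) ≤ 2 * S n := htail n hc
        _ ≤ 2 * 2 ^ (-(w + 1)) := by gcongr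
        _ = 2 ^ (-(coinWalk u c (n + 1) + 1)) := by
          rw [coinWalk, hc, walkStep, if_neg Bool.false_ne_true,
            show -(w - 1 + 1) = 1 + -(w + 1) by ring, rpow_add two_pos, rpow_one]
    · calc S (n + 1) ≤ 2 * S n ^ 2 := hhead n hc
        _ ≤ 2 * (2 ^ (-(w + 1))) ^ 2 := by gcongr; exact hS n
        _ = 2 ^ (-(coinWalk u c (n + 1) + 1)) := by
          rw [coinWalk, hc, walkStep, if_pos rfl, ← rpow_mul_natCast zero_le_two,
            show -(2 * w + 1) = 1 + -(w + 1) * (2 : ℕ) by push_cast; ring,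
            rpow_add two_pos, rpow_one]

end Walk

def headCount (c : ℕ → Bool) (a m : ℕ) : ℕ := #{i : Fin m | c (a + i) = true}

lemma headCount_le (c : ℕ → Bool) (a m : ℕ) : headCount c a m ≤ m :=
  (card_filter_le _ _).trans_eq (card_fin m)

lemma prod_ite_eq_pow_headCount {M : Type*} [CommMonoid M] (c : ℕ → Bool) (a m : ℕ) (x y : M) :
    ∏ i : Fin m, (if c (a + i) = true then x else y) =
      x ^ headCount c a m * y ^ (m - headCount c a m) := by
  have hcard := card_filter_add_card_filter_not (s := univ) fun i : Fin m => c (a + i) = true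
  rw [card_univ, Fintype.card_fin] at hcard
  rw [prod_ite, prod_const, prod_const, headCount]
  congr 2
  omega

section Growth

variable {u q A : ℝ} {c : ℕ → Bool}

lemma mul_le_walkStep (hq : q ≤ 1) (hA : 1 ≤ A * (1 - q)) {w : ℝ} (hw : A ≤ w) (b : Bool) :
    w * (if b = true then 2 else q) ≤ walkStep w b := by
  cases b <;> simp only [walkStep] <;> norm_num <;> nlinarith

lemma mul_prod_le_coinWalk (hq0 : 0 ≤ q) (hq : q ≤ 1) (hA : 1 ≤ A * (1 - q)) {a m : ℕ}
    (hw : ∀ k, a ≤ k → k < a + m → A ≤ coinWalk u c k) :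
    coinWalk u c a * ∏ i : Fin m, (if c (a + i) = true then 2 else q) ≤ coinWalk u c (a + m) := by
  induction m with
  | zero => simp
  | succ m ih =>
    have hfactor : 0 ≤ (if c (a + m) = true then 2 else q) := by split_ifs <;> positivity
    rw [Fin.prod_univ_castSucc, Fin.val_last, ← mul_assoc]
    simp only [Fin.val_castSucc]
    exact (mul_le_mul_of_nonneg_right (ih fun k hk hkm => hw k hk (by omega)) hfactor).trans
      (mul_le_walkStep hq hA (hw (a + m) (by omega) (by omega)) _)

lemma three_pow_add_le_two_pow {k t M : ℕ} (ht : 16 * t ≤ 9 * k) (hM : 16 * M ≤ k) :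
    3 ^ (t + M) ≤ 2 ^ k := by
  refine (Nat.pow_le_pow_iff_left (n := 16) (by norm_num)).mp ?_
  calc (3 ^ (t + M)) ^ 16 = 3 ^ (16 * t + 16 * M) := by ring
    _ ≤ 3 ^ (10 * k) := Nat.pow_le_pow_right (by norm_num) (by omega)
    _ = (3 ^ 10) ^ k := pow_mul 3 10 k
    _ ≤ (2 ^ 16) ^ k := Nat.pow_le_pow_left (by norm_num) k
    _ = (2 ^ k) ^ 16 := by rw [← pow_mul, ← pow_mul, mul_comm]

lemma le_coinWalk_of_three_le (h3 : ∀ k, 3 ≤ coinWalk u c k) {k M : ℕ} (hM : 16 * M ≤ k)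
    (ht : 16 * (k - headCount c 0 k) ≤ 9 * k) : (M : ℝ) ≤ coinWalk u c k := by
  set h := headCount c 0 k
  have hhk : h ≤ k := headCount_le c 0 k
  have hgrow := mul_prod_le_coinWalk (u := u) (c := c) (a := 0) (m := k) (A := 3) (q := 2 / 3)
    (by norm_num) (by norm_num) (by norm_num) fun j _ _ => h3 j
  rw [prod_ite_eq_pow_headCount, zero_add] at hgrow
  have hpow : ((3 : ℕ) : ℝ) ^ (k - h + M) ≤ ((2 : ℕ) : ℝ) ^ k := by
    exact_mod_cast three_pow_add_le_two_pow ht hM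
  have hsplit : (2 : ℝ) ^ k = 2 ^ h * 2 ^ (k - h) := by rw [← pow_add]; congr; omega
  calc (M : ℝ) ≤ 3 ^ M := by exact_mod_cast (Nat.lt_pow_self (by norm_num)).le
    _ ≤ 2 ^ h * (2 / 3) ^ (k - h) := by
      rw [div_pow, ← mul_div_assoc, ← hsplit, le_div_iff₀ (by positivity), ← pow_add, add_comm]
      exact_mod_cast hpow
    _ ≤ coinWalk u c 0 * (2 ^ h * (2 / 3) ^ (k - h)) := by
      have := h3 0
      nlinarith [show (0 : ℝ) ≤ 2 ^ h * (2 / 3) ^ (k - h) by positivity]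
    _ ≤ coinWalk u c k := hgrow

lemma one_add_le_two_rpow {ε : ℝ} (hε : 0 ≤ ε) : 1 + ε ≤ 2 ^ (2 * ε) := by
  rw [rpow_def_of_pos two_pos]
  nlinarith [add_one_le_exp (log 2 * (2 * ε)), log_two_gt_d9]

lemma two_rpow_le_coinWalk_add {ε β : ℝ} (hε0 : 0 < ε) (hε : ε ≤ 1 / 2) (hβ : β + 8 * ε ≤ 1 / 2)
    {M s L : ℕ} (hM : (1 + ε) / ε ≤ M) (hw : ∀ k, s ≤ k → (M : ℝ) ≤ coinWalk u c k)
    (hsL : s ≤ 10 * ε * L) (hh : (1 / 2 - ε) * L ≤ headCount c s L) :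
    (2 : ℝ) ^ ((s + L : ℕ) * β) ≤ coinWalk u c (s + L) := by
  set h := headCount c s L
  have hhL : h ≤ L := headCount_le c s L
  have hM1 : (1 : ℝ) ≤ M := le_trans (by rw [le_div_iff₀ hε0]; linarith) hM
  have hA : 1 ≤ (M : ℝ) * (1 - (1 + ε)⁻¹) := by
    rw [show 1 - (1 + ε)⁻¹ = ε / (1 + ε) by field_simp; ring]
    calc (1 : ℝ) = (1 + ε) / ε * (ε / (1 + ε)) := by field_simp
      _ ≤ M * (ε / (1 + ε)) := by gcongr
  have hgrow := mul_prod_le_coinWalk (u := u) (c := c) (a := s) (m := L) (by positivity)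
    (inv_le_one_of_one_le₀ (by linarith)) hA fun k hk _ => hw k hk
  rw [prod_ite_eq_pow_headCount] at hgrow
  have htail : (2 : ℝ) ^ (-(2 * ε)) ≤ (1 + ε)⁻¹ := by
    rw [rpow_neg zero_le_two]
    exact inv_anti₀ (by linarith) (one_add_le_two_rpow hε0.le)
  have hexp : ((s + L : ℕ) : ℝ) * β ≤ h + -(2 * ε) * (L - h : ℕ) := by
    have hsβ : (s : ℝ) * β ≤ s * (1 / 2) := by gcongr; linarith
    have hLβ : (L : ℝ) * β ≤ L * (1 / 2 - 8 * ε) := by gcongr; linarith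
    have hh' : (1 + 2 * ε) * ((1 / 2 - ε) * L) ≤ (1 + 2 * ε) * h := by gcongr
    push_cast [hhL]
    nlinarith [mul_nonneg (Nat.cast_nonneg L) hε0.le,
      mul_nonneg (Nat.cast_nonneg L) (by linarith : 0 ≤ 1 - 2 * ε)]
  calc (2 : ℝ) ^ ((s + L : ℕ) * β) ≤ 2 ^ (h + -(2 * ε) * (L - h : ℕ)) :=
        rpow_le_rpow_of_exponent_le one_le_two hexp
    _ = 2 ^ h * (2 ^ (-(2 * ε))) ^ (L - h) := by
        rw [rpow_add two_pos, rpow_natCast, rpow_mul_natCast zero_le_two]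
    _ ≤ 2 ^ h * (1 + ε)⁻¹ ^ (L - h) := by gcongr
    _ ≤ coinWalk u c s * (2 ^ h * (1 + ε)⁻¹ ^ (L - h)) :=
        le_mul_of_one_le_left (by positivity) (hM1.trans (hw s le_rfl))
    _ ≤ coinWalk u c (s + L) := hgrow

end Growth

def FrequentHeads (ε : ℝ) (c : ℕ → Bool) (a N : ℕ) : Prop :=
  ∀ m, N ≤ m → (1 / 2 - ε) * m ≤ headCount c a m

theorem two_rpow_le_coinWalk {u ε β : ℝ} {c : ℕ → Bool} (hε0 : 0 < ε) (hε : ε ≤ 1 / 16)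
    (hβ : β + 8 * ε ≤ 1 / 2) {M s L : ℕ} (hM : (1 + ε) / ε ≤ M) (hMs : 16 * M ≤ s)
    (hsL : s ≤ 10 * ε * L) (h3 : ∀ k, 3 ≤ coinWalk u c k) (h₁ : FrequentHeads ε c 0 s)
    (h₂ : FrequentHeads ε c s L) {n : ℕ} (hn : s + L ≤ n) :
    (2 : ℝ) ^ (n * β) ≤ coinWalk u c n := by
  obtain ⟨m, rfl⟩ := Nat.exists_eq_add_of_le (le_of_add_le_left hn)
  have hw : ∀ k, s ≤ k → (M : ℝ) ≤ coinWalk u c k := fun k hk => by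
    refine le_coinWalk_of_three_le h3 (hMs.trans hk) ?_
    have hhk := headCount_le c 0 k
    have := h₁ k hk
    rw [← Nat.cast_le (α := ℝ)]
    push_cast [hhk]
    nlinarith [(Nat.cast_nonneg k : (0 : ℝ) ≤ k)]
  have hLm : L ≤ m := by omega
  exact two_rpow_le_coinWalk_add hε0 (by linarith) hβ hM hw
    (hsL.trans (by gcongr)) (h₂ m hLm)

def extendByFalse {N : ℕ} (v : Fin N → Bool) (i : ℕ) : Bool :=
  if h : i < N then v ⟨i, h⟩ else false

lemma extendByFalse_of_lt {N i : ℕ} {v : Fin N → Bool} (h : i < N) :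
    extendByFalse v i = v ⟨i, h⟩ := dif_pos h

lemma extendByFalse_cons_zero {N : ℕ} (b : Bool) (w : Fin N → Bool) :
    extendByFalse (Fin.cons b w : Fin (N + 1) → Bool) 0 = b := rfl

lemma extendByFalse_cons_succ {N : ℕ} (b : Bool) (w : Fin N → Bool) :
    (fun i => extendByFalse (Fin.cons b w : Fin (N + 1) → Bool) (i + 1)) = extendByFalse w := by
  funext i
  by_cases hi : i < N
  · rw [extendByFalse_of_lt (by omega), extendByFalse_of_lt hi]
    exact Fin.cons_succ (α := fun _ => Bool) b w ⟨i, hi⟩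
  · simp [extendByFalse, hi]

lemma coinWalk_extendByFalse_cons {N : ℕ} (u : ℝ) (b : Bool) (w : Fin N → Bool) (k : ℕ) :
    coinWalk u (extendByFalse (Fin.cons b w : Fin (N + 1) → Bool)) (k + 1) =
      coinWalk (walkStep u b) (extendByFalse w) k := by
  rw [coinWalk_succ', extendByFalse_cons_zero, extendByFalse_cons_succ]

lemma card_filter_fin_succ {N : ℕ} (P : (Fin (N + 1) → Bool) → Prop) [DecidablePred P] :
    #{v | P v} =
      #{w : Fin N → Bool | P (Fin.cons true w)} + #{w : Fin N → Bool | P (Fin.cons false w)} := by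
  simp only [card_filter]
  rw [← (Fin.consEquiv fun _ => Bool).sum_comp, Fintype.sum_prod_type, Fintype.sum_bool]
  rfl

theorem card_exists_coinWalk_lt_le {a : ℝ} {f : ℝ → ℝ} (hf0 : ∀ u, 0 ≤ f u)
    (hf_lt : ∀ u < a, 1 ≤ f u) (hf_step : ∀ u, a ≤ u → f (2 * u) + f (u - 1) ≤ 2 * f u)
    (N : ℕ) (u : ℝ) :
    (#{v : Fin N → Bool | ∃ k ≤ N, coinWalk u (extendByFalse v) k < a} : ℝ) ≤ f u * 2 ^ N := by
  induction N generalizing u with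
  | zero => ?_
  | succ N ih => ?_
  all_goals
    by_cases hu : u < a
    · calc (#{v | ∃ k ≤ _, coinWalk u (extendByFalse v) k < a} : ℝ)
          ≤ 2 ^ _ := by exact_mod_cast (card_filter_le _ _).trans_eq (by simp)
        _ ≤ f u * 2 ^ _ := le_mul_of_one_le_left (by positivity) (hf_lt u hu)
  · rw [filter_false_of_mem]
    · simpa using hf0 u
    · rintro v - ⟨k, hk, hlt⟩
      obtain rfl := Nat.le_zero.mp hk
      exact hu hlt
  · have hcons : ∀ b (w : Fin N → Bool),
        (∃ k ≤ N + 1, coinWalk u (extendByFalse (Fin.cons b w : Fin (N + 1) → Bool)) k < a) ↔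
          ∃ k ≤ N, coinWalk (walkStep u b) (extendByFalse w) k < a := by
      refine fun b w => ⟨?_, fun ⟨k, hk, hlt⟩ => ⟨k + 1, by omega, ?_⟩⟩
      · rintro ⟨_ | k, hk, hlt⟩
        · exact absurd hlt hu
        · exact ⟨k, by omega, by rwa [coinWalk_extendByFalse_cons] at hlt⟩
      · rwa [coinWalk_extendByFalse_cons]
    rw [card_filter_fin_succ]
    simp only [hcons]
    push_cast
    calc _ ≤ f (2 * u) * 2 ^ N + f (u - 1) * 2 ^ N := add_le_add (ih _) (ih _)
      _ ≤ 2 * f u * 2 ^ N := by rw [← add_mul]; gcongr; exact hf_step u (not_lt.mp hu)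
      _ = f u * 2 ^ (N + 1) := by ring

lemma goldenRatio_rpow_step {a u : ℝ} (hu : 2 ≤ u) :
    φ ^ (a - 2 * u) + φ ^ (a - (u - 1)) ≤ 2 * φ ^ (a - u) := by
  have hinv : φ ^ (-u) ≤ 2 - φ := by
    calc φ ^ (-u) ≤ φ ^ (-2 : ℝ) := rpow_le_rpow_of_exponent_le one_lt_goldenRatio.le (by linarith)
      _ = (φ + 1)⁻¹ := by rw [rpow_neg goldenRatio_pos.le, rpow_two, goldenRatio_sq]
      _ = 2 - φ := inv_eq_of_mul_eq_one_right (by linear_combination (-1 : ℝ) * goldenRatio_sq)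
  calc φ ^ (a - 2 * u) + φ ^ (a - (u - 1)) = φ ^ (a - u) * (φ ^ (-u) + φ) := by
        rw [mul_add, ← rpow_add goldenRatio_pos, ← rpow_add_one goldenRatio_ne_zero]
        ring_nf
    _ ≤ φ ^ (a - u) * 2 := by gcongr; linarith
    _ = 2 * φ ^ (a - u) := mul_comm _ _

lemma card_filter_card_true_le_le {m : ℕ} {x z : ℝ} (hz : 1 ≤ z) :
    (#{v : Fin m → Bool | (#{i | v i = true} : ℝ) ≤ x} : ℝ) ≤ z ^ x * (1 + z⁻¹) ^ m := by
  set g : Bool → ℝ := fun b => if b = true then z⁻¹ else 1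
  have hprod : ∀ v : Fin m → Bool, ∏ i, g (v i) = z⁻¹ ^ #{i | v i = true} := fun v => by
    rw [prod_ite, prod_const, prod_const, one_pow, mul_one]
  calc (#{v : Fin m → Bool | (#{i | v i = true} : ℝ) ≤ x} : ℝ)
      = ∑ v ∈ {v : Fin m → Bool | (#{i | v i = true} : ℝ) ≤ x}, 1 := by simp
    _ ≤ ∑ v ∈ {v : Fin m → Bool | (#{i | v i = true} : ℝ) ≤ x}, z ^ x * ∏ i, g (v i) := by
      refine sum_le_sum fun v hv => ?_
      rw [hprod, inv_pow, ← div_eq_mul_inv, one_le_div (by positivity), ← rpow_natCast]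
      exact rpow_le_rpow_of_exponent_le hz (mem_filter.mp hv).2
    _ ≤ ∑ v : Fin m → Bool, z ^ x * ∏ i, g (v i) := by
      refine sum_le_sum_of_subset_of_nonneg (filter_subset _ _) fun v _ _ => ?_
      have : 0 < z := by linarith
      rw [hprod]
      positivity
    _ = z ^ x * (1 + z⁻¹) ^ m := by
      rw [← mul_sum, ← Fintype.prod_sum (fun (_ : Fin m) => g), Fintype.sum_bool, prod_const,
        card_univ, Fintype.card_fin, add_comm]
      simp only [g, if_true, Bool.false_eq_true, if_false]

-- `z ^ ((1/2 - ε) m) * (1 + 1/z) ^ m / 2 ^ m` at `z = 1 + ε`: the exponential-moment bound on the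
-- probability of fewer than `(1/2 - ε) m` heads in `m` fair tosses is `chernoffRate ε ^ m`.
noncomputable def chernoffRate (ε : ℝ) : ℝ := (1 + ε) ^ (1 / 2 - ε) * (1 + (1 + ε)⁻¹) / 2

lemma chernoffRate_pos {ε : ℝ} (hε : 0 ≤ ε) : 0 < chernoffRate ε := by
  unfold chernoffRate; positivity

lemma chernoffRate_lt_one {ε : ℝ} (hε0 : 0 < ε) (hε : ε ≤ 1 / 2) : chernoffRate ε < 1 := by
  have hbern : (1 + ε) ^ (1 / 2 - ε) ≤ 1 + (1 / 2 - ε) * ε :=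
    rpow_one_add_le_one_add_mul_self (by linarith) (by linarith) (by linarith)
  calc chernoffRate ε ≤ (1 + (1 / 2 - ε) * ε) * (1 + (1 + ε)⁻¹) / 2 := by
        unfold chernoffRate; gcongr
    _ < 1 := by
        rw [div_lt_one two_pos, show 1 + (1 + ε)⁻¹ = (2 + ε) / (1 + ε) by field_simp; ring,
          mul_div_assoc', div_lt_iff₀ (by positivity)]
        nlinarith [pow_pos hε0 2, pow_pos hε0 3]

lemma natCast_mul_inv_two_pow_le_ofReal {n L : ℕ} {y : ℝ} (h : (n : ℝ) ≤ y * 2 ^ L) :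
    (n : ℝ≥0∞) * 2⁻¹ ^ L ≤ ENNReal.ofReal y := by
  have hL : (2⁻¹ : ℝ≥0∞) ^ L = ENNReal.ofReal (2⁻¹ ^ L) := by
    rw [ENNReal.ofReal_pow (by norm_num), ENNReal.ofReal_inv_of_pos two_pos, ENNReal.ofReal_ofNat]
  rw [hL, ← ENNReal.ofReal_natCast, ← ENNReal.ofReal_mul (Nat.cast_nonneg _)]
  refine ENNReal.ofReal_le_ofReal ?_
  rwa [inv_pow, ← div_eq_mul_inv, div_le_iff₀ (by positivity)]

lemma tsum_ofReal_pow_add_le {θ r : ℝ} (hθ0 : 0 ≤ θ) (hθ1 : θ < 1) {N : ℕ}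
    (hN : θ ^ N ≤ r * (1 - θ)) : ∑' j, ENNReal.ofReal (θ ^ (N + j)) ≤ ENNReal.ofReal r := by
  have hgeom := (hasSum_geometric_of_lt_one hθ0 hθ1).mul_left (θ ^ N)
  simp_rw [← pow_add] at hgeom
  rw [← ENNReal.ofReal_tsum_of_nonneg (fun j => by positivity) hgeom.summable, hgeom.tsum_eq]
  refine ENNReal.ofReal_le_ofReal ?_
  rwa [← div_eq_mul_inv, div_le_iff₀ (by linarith)]

section FairCoins

variable {Ω : Type*} [MeasurableSpace Ω] {μ : Measure Ω} [IsProbabilityMeasure μ]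
  {C : ℕ → Ω → Bool}

lemma measure_preimage_singleton_eq_inv_two (hC : ∀ n, Measurable (C n))
    (hfair : ∀ n, μ (C n ⁻¹' {true}) = 1 / 2) (n : ℕ) (b : Bool) :
    μ (C n ⁻¹' {b}) = 2⁻¹ := by
  cases b
  · rw [show C n ⁻¹' {false} = (C n ⁻¹' {true})ᶜ by ext; simp,
      prob_compl_eq_one_sub (hC n (measurableSet_singleton _)), hfair, one_div,
      ENNReal.one_sub_inv_two]
  · rw [hfair, one_div]

lemma measure_forall_eq_eq_inv_two_pow (hC : ∀ n, Measurable (C n)) (hind : iIndepFun C μ)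
    (hfair : ∀ n, μ (C n ⁻¹' {true}) = 1 / 2) {L : ℕ} {e : Fin L → ℕ} (he : e.Injective)
    (v : Fin L → Bool) :
    μ {ω | ∀ i, C (e i) ω = v i} = 2⁻¹ ^ L := by
  have hset : {ω | ∀ i, C (e i) ω = v i} = ⋂ i ∈ (univ : Finset (Fin L)), C (e i) ⁻¹' {v i} := by
    ext; simp
  rw [hset, (hind.precomp he).measure_inter_preimage_eq_mul univ
    fun i _ => measurableSet_singleton _]
  simp [measure_preimage_singleton_eq_inv_two hC hfair]

lemma measure_setOf_coins_eq_card_mul (hC : ∀ n, Measurable (C n)) (hind : iIndepFun C μ)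
    (hfair : ∀ n, μ (C n ⁻¹' {true}) = 1 / 2) {L : ℕ} {e : Fin L → ℕ} (he : e.Injective)
    (P : (Fin L → Bool) → Prop) [DecidablePred P] :
    μ {ω | P fun i => C (e i) ω} = #{v | P v} * 2⁻¹ ^ L := by
  have hset : {ω | P fun i => C (e i) ω} =
      ⋃ v ∈ ({v | P v} : Finset _), {ω | ∀ i, C (e i) ω = v i} := by
    ext ω
    simp only [Set.mem_ofPred_eq, Set.mem_iUnion, mem_filter, mem_univ, true_and, exists_prop]
    exact ⟨fun h => ⟨_, h, fun _ => rfl⟩, fun ⟨v, hv, hω⟩ => funext hω ▸ hv⟩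
  rw [hset, measure_biUnion_finset]
  · simp [measure_forall_eq_eq_inv_two_pow hC hind hfair he]
  · intro v _ w _ hvw
    exact Set.disjoint_left.mpr fun ω h₁ h₂ => hvw (funext fun i => (h₁ i).symm.trans (h₂ i))
  · intro v _
    simp only [Set.ofPred_forall]
    exact MeasurableSet.iInter fun i => hC _ (measurableSet_singleton _)

theorem measure_exists_coinWalk_lt_le (hC : ∀ n, Measurable (C n)) (hind : iIndepFun C μ)
    (hfair : ∀ n, μ (C n ⁻¹' {true}) = 1 / 2) {a : ℝ} (ha : 2 ≤ a) (u : ℝ) :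
    μ {ω | ∃ k, coinWalk u (C · ω) k < a} ≤ ENNReal.ofReal (φ ^ (a - u)) := by
  have hunion : {ω | ∃ k, coinWalk u (C · ω) k < a} =
      ⋃ N, {ω | ∃ k ≤ N, coinWalk u (C · ω) k < a} := by
    ext ω
    simp only [Set.mem_ofPred_eq, Set.mem_iUnion]
    exact ⟨fun ⟨k, hk⟩ => ⟨k, k, le_rfl, hk⟩, fun ⟨_, k, _, hk⟩ => ⟨k, hk⟩⟩
  have hmono : Monotone fun N => {ω | ∃ k ≤ N, coinWalk u (C · ω) k < a} :=
    fun N N' hN ω ⟨k, hk, hlt⟩ => ⟨k, hk.trans hN, hlt⟩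
  rw [hunion, hmono.measure_iUnion]
  refine iSup_le fun N => ?_
  have hprefix : {ω | ∃ k ≤ N, coinWalk u (C · ω) k < a} =
      {ω | ∃ k ≤ N, coinWalk u (extendByFalse fun i : Fin N => C i ω) k < a} := by
    ext ω
    refine exists_congr fun k => and_congr_right fun hk => ?_
    rw [coinWalk_congr fun i hi =>
      (extendByFalse_of_lt (v := fun i : Fin N => C i ω) (by omega)).symm]
  rw [hprefix, measure_setOf_coins_eq_card_mul hC hind hfair Fin.val_injective
    (fun v => ∃ k ≤ N, coinWalk u (extendByFalse v) k < a)]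
  refine natCast_mul_inv_two_pow_le_ofReal (card_exists_coinWalk_lt_le (f := fun u => φ ^ (a - u))
    (fun _ => by positivity) ?_ ?_ N u)
  · exact fun u hu => one_le_rpow one_lt_goldenRatio.le (by linarith)
  · exact fun u hu => goldenRatio_rpow_step (ha.trans hu)

lemma measure_headCount_lt_le (hC : ∀ n, Measurable (C n)) (hind : iIndepFun C μ)
    (hfair : ∀ n, μ (C n ⁻¹' {true}) = 1 / 2) {ε : ℝ} (hε : 0 ≤ ε) (a m : ℕ) :
    μ {ω | (headCount (C · ω) a m : ℝ) < (1 / 2 - ε) * m} ≤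
      ENNReal.ofReal (chernoffRate ε ^ m) := by
  rw [show {ω | (headCount (C · ω) a m : ℝ) < (1 / 2 - ε) * m} =
      {ω | (fun v : Fin m → Bool => (#{i | v i = true} : ℝ) < (1 / 2 - ε) * m)
        fun i => C (a + i) ω} from rfl,
    measure_setOf_coins_eq_card_mul hC hind hfair (fun i j h => Fin.ext (Nat.add_left_cancel h))
      (fun v => (#{i | v i = true} : ℝ) < (1 / 2 - ε) * m)]
  refine natCast_mul_inv_two_pow_le_ofReal ?_
  calc (#{v : Fin m → Bool | (#{i | v i = true} : ℝ) < (1 / 2 - ε) * m} : ℝ)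
      ≤ #{v : Fin m → Bool | (#{i | v i = true} : ℝ) ≤ (1 / 2 - ε) * m} := by
        exact_mod_cast card_le_card (monotone_filter_right _ fun _ _ => le_of_lt)
    _ ≤ (1 + ε) ^ ((1 / 2 - ε) * m) * (1 + (1 + ε)⁻¹) ^ m :=
        card_filter_card_true_le_le (by linarith)
    _ = chernoffRate ε ^ m * 2 ^ m := by
        rw [rpow_mul_natCast (by linarith), ← mul_pow, ← mul_pow, chernoffRate,
          div_mul_cancel₀ _ two_ne_zero]

lemma measure_not_frequentHeads_le (hC : ∀ n, Measurable (C n)) (hind : iIndepFun C μ)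
    (hfair : ∀ n, μ (C n ⁻¹' {true}) = 1 / 2) {ε r : ℝ} (hε0 : 0 < ε) (hε : ε ≤ 1 / 2)
    {N : ℕ} (hN : chernoffRate ε ^ N ≤ r * (1 - chernoffRate ε)) (a : ℕ) :
    μ {ω | ¬ FrequentHeads ε (C · ω) a N} ≤ ENNReal.ofReal r := by
  have hsub : {ω | ¬ FrequentHeads ε (C · ω) a N} ⊆
      ⋃ j, {ω | (headCount (C · ω) a (N + j) : ℝ) < (1 / 2 - ε) * (N + j : ℕ)} := by
    intro ω hω
    simp only [FrequentHeads, not_forall, not_le, Set.mem_ofPred_eq] at hω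
    obtain ⟨m, hm, hlt⟩ := hω
    obtain ⟨j, rfl⟩ := Nat.exists_eq_add_of_le hm
    exact Set.mem_iUnion.mpr ⟨j, hlt⟩
  calc μ {ω | ¬ FrequentHeads ε (C · ω) a N}
      ≤ ∑' j, μ {ω | (headCount (C · ω) a (N + j) : ℝ) < (1 / 2 - ε) * (N + j : ℕ)} :=
        (measure_mono hsub).trans (measure_iUnion_le _)
    _ ≤ ∑' j, ENNReal.ofReal (chernoffRate ε ^ (N + j)) :=
        ENNReal.tsum_le_tsum fun j => measure_headCount_lt_le hC hind hfair hε0.le a (N + j)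
    _ ≤ ENNReal.ofReal r :=
        tsum_ofReal_pow_add_le (chernoffRate_pos hε0.le).le (chernoffRate_lt_one hε0 hε) hN

end FairCoins

theorem exists_forall_two_rpow_le_coinWalk {β ρ : ℝ} (hβ0 : 0 < β) (hβ : β < 1 / 2)
    (hρ : 0 < ρ) :
    ∃ n₀ : ℕ, ∀ {Ω : Type*} [MeasurableSpace Ω] (μ : Measure Ω) [IsProbabilityMeasure μ]
      (C : ℕ → Ω → Bool), (∀ n, Measurable (C n)) → iIndepFun C μ →
      (∀ n, μ (C n ⁻¹' {true}) = 1 / 2) → ∀ u : ℝ,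
      μ {ω | ∀ n, n₀ ≤ n → (2 : ℝ) ^ (n * β) ≤ coinWalk u (C · ω) n}ᶜ ≤
        ENNReal.ofReal (φ ^ (3 - u) + ρ) := by
  set ε := (1 / 2 - β) / 8
  have hε0 : 0 < ε := by positivity
  have hε : ε ≤ 1 / 16 := by simp only [ε]; linarith
  have hβε : β + 8 * ε ≤ 1 / 2 := by simp only [ε]; linarith
  set θ := chernoffRate ε
  have hθ1 : θ < 1 := chernoffRate_lt_one hε0 (by linarith)
  obtain ⟨N, hN⟩ := exists_pow_lt_of_lt_one (by nlinarith : 0 < ρ / 2 * (1 - θ)) hθ1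
  set M := ⌈(1 + ε) / ε⌉₊
  set s := max (16 * M) N
  set L := max N ⌈(s : ℝ) / (10 * ε)⌉₊
  refine ⟨s + L, fun μ _ C hC hind hfair u => ?_⟩
  have hsL : (s : ℝ) ≤ 10 * ε * L := by
    rw [← div_le_iff₀' (by positivity)]
    exact (Nat.le_ceil _).trans (by exact_mod_cast le_max_right _ _)
  have hsub : {ω | ∀ n, s + L ≤ n → (2 : ℝ) ^ (n * β) ≤ coinWalk u (C · ω) n}ᶜ ⊆
      {ω | ∃ k, coinWalk u (C · ω) k < 3} ∪ ({ω | ¬ FrequentHeads ε (C · ω) 0 s} ∪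
        {ω | ¬ FrequentHeads ε (C · ω) s L}) := by
    intro ω hω
    by_contra hgood
    simp only [Set.mem_union, Set.mem_ofPred_eq, not_or, not_exists, not_lt, not_not] at hgood
    exact hω fun n hn => two_rpow_le_coinWalk hε0 hε hβε (Nat.le_ceil _) (le_max_left _ _)
      hsL hgood.1 hgood.2.1 hgood.2.2 hn
  have hθN : ∀ K, N ≤ K → θ ^ K ≤ ρ / 2 * (1 - θ) := fun K hK =>
    (pow_le_pow_of_le_one (chernoffRate_pos hε0.le).le hθ1.le hK).trans hN.le
  calc _ ≤ ENNReal.ofReal (φ ^ (3 - u)) + (ENNReal.ofReal (ρ / 2) + ENNReal.ofReal (ρ / 2)) := by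
        refine (measure_mono hsub).trans ((measure_union_le _ _).trans (add_le_add ?_
          ((measure_union_le _ _).trans (add_le_add ?_ ?_))))
        · exact measure_exists_coinWalk_lt_le hC hind hfair (by norm_num) u
        · exact measure_not_frequentHeads_le hC hind hfair hε0 (by linarith)
            (hθN s (le_max_right _ _)) 0
        · exact measure_not_frequentHeads_le hC hind hfair hε0 (by linarith)
            (hθN L (le_max_left _ _)) s
    _ = ENNReal.ofReal (φ ^ (3 - u) + ρ) := by
        rw [← ENNReal.ofReal_add (by positivity) (by positivity),
          ← ENNReal.ofReal_add (by positivity) (by positivity), add_halves]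

lemma deltaP_eq {η : ℝ} (hη : 0 < η) : deltaP η = 2 * φ ^ (3 + logb 2 η) := by
  have h8 : logb 2 (8 * η) = 3 + logb 2 η := by
    rw [logb_mul (by norm_num) hη.ne', show (8 : ℝ) = 2 ^ (3 : ℝ) by norm_num,
      logb_rpow two_pos (by norm_num)]
  rw [deltaP, ← goldenRatio, ← h8, rpow_def_of_pos (by positivity),
    rpow_def_of_pos goldenRatio_pos, logb, logb]
  ring_nf

lemma ofReal_one_sub_le_measure {Ω : Type*} [MeasurableSpace Ω] {μ : Measure Ω}
    [IsProbabilityMeasure μ] {s : Set Ω} {δ : ℝ} (hδ : 0 ≤ δ) (h : μ sᶜ ≤ ENNReal.ofReal δ) :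
    ENNReal.ofReal (1 - δ) ≤ μ s := by
  rw [ENNReal.ofReal_sub _ hδ, ENNReal.ofReal_one, tsub_le_iff_right]
  calc (1 : ℝ≥0∞) = μ (s ∪ sᶜ) := by rw [Set.union_compl_self, measure_univ]
    _ ≤ μ s + μ sᶜ := measure_union_le _ _
    _ ≤ μ s + ENNReal.ofReal δ := by gcongr

/-- Strong polarization of a `[0,1]`-valued process driven by i.i.d. fair coins that
at most doubles on tails and at most doubles-the-square on heads: there is a threshold
`n₀ = n₀(β, δ - δ'(η))` such that `S₀ ≤ η` implies
`Pr(S_n ≤ 2^{-2^{nβ}} for all n ≥ n₀) ≥ 1 - δ`. -/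
theorem strong_polarization_of_bounded_process :
    ∃ n₀fun : ℝ → ℝ → ℕ,
      ∀ (β η δ : ℝ), 0 < β → β < 1 / 2 → 0 < η → deltaP η < δ →
      ∀ (Ω : Type) (_ : MeasurableSpace Ω) (μ : Measure Ω), IsProbabilityMeasure μ →
      ∀ (B : ℕ → Ω → Bool) (S : ℕ → Ω → ℝ),
        (∀ n, Measurable (B n)) →
        iIndepFun B μ →
        (∀ n, μ (B n ⁻¹' {true}) = 1 / 2) →
        (∀ ω n, S n ω ∈ Set.Icc (0 : ℝ) 1) →
        (∀ ω n, B (n + 1) ω = false → S (n + 1) ω ≤ 2 * S n ω) →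
        (∀ ω n, B (n + 1) ω = true → S (n + 1) ω ≤ 2 * (S n ω) ^ 2) →
        (∀ ω, S 0 ω ≤ η) →
        ENNReal.ofReal (1 - δ) ≤
          μ {ω | ∀ n : ℕ, n₀fun β (δ - deltaP η) ≤ n →
            S n ω ≤ (2 : ℝ) ^ (-((2 : ℝ) ^ ((n : ℝ) * β)))} := by
  choose! n₀ hn₀ using fun (β ρ : ℝ) (h : 0 < β ∧ β < 1 / 2 ∧ 0 < ρ) =>
    exists_forall_two_rpow_le_coinWalk h.1 h.2.1 h.2.2
  refine ⟨n₀, fun β η δ hβ0 hβ hη hδ Ω _ μ _ B S hB hind hfair hS htail hhead h0 => ?_⟩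
  set u := -1 - logb 2 η
  have hφ : φ ^ (3 - u) ≤ deltaP η := by
    rw [deltaP_eq hη, show 3 - u = 1 + (3 + logb 2 η) by ring, rpow_add goldenRatio_pos, rpow_one]
    gcongr
    exact goldenRatio_lt_two.le
  have hwalk := hn₀ β (δ - deltaP η) ⟨hβ0, hβ, by linarith⟩ μ (fun k => B (k + 1))
    (fun n => hB _) (hind.precomp Nat.succ_injective) (fun n => hfair _) u
  have hδ0 : 0 ≤ δ := by linarith [(rpow_nonneg goldenRatio_pos.le (3 - u)).trans hφ]
  have hcompl := hwalk.trans (ENNReal.ofReal_le_ofReal (show _ ≤ δ by linarith))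
  refine (ofReal_one_sub_le_measure hδ0 hcompl).trans (measure_mono fun ω hω n hn => ?_)
  have hS0 : S 0 ω ≤ 2 ^ (-(u + 1)) := by
    rw [show -(u + 1) = logb 2 η by ring, rpow_logb two_pos (by norm_num) hη]
    exact h0 ω
  calc S n ω ≤ 2 ^ (-(coinWalk u (fun k => B (k + 1) ω) n + 1)) :=
        le_two_rpow_neg_coinWalk (fun n => (hS ω n).1) hS0 (htail ω) (hhead ω) n
    _ ≤ 2 ^ (-((2 : ℝ) ^ ((n : ℝ) * β))) :=
        rpow_le_rpow_of_exponent_le one_le_two (by linarith [hω n hn])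
end
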